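/- Let k ≥ 1 be an integer, N ≥ 4 an integer, and 0 < δ < 1/4. Let f be a real-valued function of class C^k on [N, 2N] such that there exist λ_k > 0 and c_k ≥ 1 with λ_k ≤ |f^{(k)}(x)| ≤ c_k·λ_k for all x ∈ [N, 2N]. Assume moreover (k+1)!·δ < λ_k. Then, with α_k = 2k·(2c_k)^{2/(k(k+1))}, we have R(f,N,δ) ≤ α_k·N·λ_k^{2/(k(k+1))} + 4k. -/

import Mathlib

/-!
Take `k + 1` integers `n₀ < ⋯ < n_k` of `S(f, N, δ)`. By the mean value theorem for divided
differences, the divided difference of `f` at these nodes is `f⁽ᵏ⁾(ξ) / k!`, of size between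
`λ / k!` and `c λ / k!`. Replacing each `f(nᵢ)` by its nearest integer moves it by less than
`(k + 1) δ < λ / k!`, so the divided difference of the nearest integers is nonzero and at most
`2 c λ`; multiplied by the Vandermonde product `∏_{i<j} (n_j - n_i) ≤ (n_k - n₀)^{k(k+1)/2}` it is a
nonzero integer. Hence any `k + 1` points of `S(f, N, δ)` span an interval of length at least
`(2 c λ)^{-2/(k(k+1))}`, and cutting `[N, 2N]` into blocks of that length, each holding at most `k`
points, gives the bound.
-/

open Finset Polynomial

theorem Polynomial.iterate_deriv_eval {𝕜 : Type*} [NontriviallyNormedField 𝕜] (P : 𝕜[X]) (n : ℕ) :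
    deriv^[n] (fun x => P.eval x) = fun x => (derivative^[n] P).eval x := by
  induction n generalizing P with
  | zero => rfl
  | succ n ih =>
    have hP : deriv (fun x => P.eval x) = fun x => (derivative P).eval x := by
      ext x; exact P.deriv
    rw [Function.iterate_succ_apply, hP, ih, Function.iterate_succ_apply]

theorem Polynomial.iteratedDerivWithin_eval_of_natDegree_le {𝕜 : Type*} [NontriviallyNormedField 𝕜]
    {s : Set 𝕜} (hs : UniqueDiffOn 𝕜 s) {P : 𝕜[X]} {k : ℕ} (hP : P.natDegree ≤ k) {x : 𝕜}
    (hx : x ∈ s) : iteratedDerivWithin k (fun y => P.eval y) s x = k.factorial * P.coeff k := by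
  have hP : ContDiff 𝕜 k fun y => P.eval y := P.contDiff_aeval k
  have hdeg : (derivative^[k] P).natDegree = 0 := by
    grind [natDegree_iterate_derivative]
  rw [iteratedDerivWithin_eq_iteratedDeriv hs hP.contDiffAt hx, iteratedDeriv_eq_iterate,
    P.iterate_deriv_eval, eq_C_of_natDegree_eq_zero hdeg, coeff_iterate_derivative]
  simp [Nat.descFactorial_self]

theorem exists_strictMono_derivWithin_eq_zero {a b : ℝ} {g : ℝ → ℝ}
    (hg : ContinuousOn g (Set.Icc a b)) {n : ℕ} {t : Fin (n + 2) → ℝ} (ht : StrictMono t)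
    (htI : ∀ i, t i ∈ Set.Icc a b) (hz : ∀ i, g (t i) = 0) :
    ∃ ξ : Fin (n + 1) → ℝ, StrictMono ξ ∧ (∀ i, ξ i ∈ Set.Icc a b) ∧
      ∀ i, derivWithin g (Set.Icc a b) (ξ i) = 0 := by
  have hrolle : ∀ i : Fin (n + 1), ∃ ξ ∈ Set.Ioo (t i.castSucc) (t i.succ), deriv g ξ = 0 :=
    fun i => exists_deriv_eq_zero (ht i.castSucc_lt_succ)
      (hg.mono (Set.Icc_subset_Icc (htI _).1 (htI _).2)) (by rw [hz, hz])
  choose ξ hξ hξ0 using hrolle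
  have hξI : ∀ i, ξ i ∈ Set.Ioo a b := fun i =>
    ⟨(htI i.castSucc).1.trans_lt (hξ i).1, (hξ i).2.trans_le (htI i.succ).2⟩
  refine ⟨ξ, Fin.strictMono_iff_lt_succ.2 fun i => ?_, fun i => Set.Ioo_subset_Icc_self (hξI i),
    fun i => ?_⟩
  · calc ξ i.castSucc < t i.castSucc.succ := (hξ _).2
      _ = t i.succ.castSucc := by rw [Fin.succ_castSucc]
      _ < ξ i.succ := (hξ _).1
  · rw [derivWithin_of_mem_nhds (Icc_mem_nhds (hξI i).1 (hξI i).2), hξ0]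

theorem exists_iteratedDerivWithin_eq_zero {a b : ℝ} (hab : a < b) {n : ℕ} {g : ℝ → ℝ}
    (hg : ContDiffOn ℝ n g (Set.Icc a b)) {t : Fin (n + 1) → ℝ} (ht : StrictMono t)
    (htI : ∀ i, t i ∈ Set.Icc a b) (hz : ∀ i, g (t i) = 0) :
    ∃ ξ ∈ Set.Icc a b, iteratedDerivWithin n g (Set.Icc a b) ξ = 0 := by
  induction n generalizing g with
  | zero => exact ⟨t 0, htI 0, by simpa using hz 0⟩
  | succ n ih =>
    obtain ⟨ξ, hξ, hξI, hξ0⟩ := exists_strictMono_derivWithin_eq_zero hg.continuousOn ht htI hz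
    have hg' : ContDiffOn ℝ n (derivWithin g (Set.Icc a b)) (Set.Icc a b) :=
      hg.derivWithin (uniqueDiffOn_Icc hab) (by push_cast; rfl)
    simpa only [iteratedDerivWithin_succ'] using ih hg' hξ hξI hξ0

noncomputable def dividedDifference {m : ℕ} (t y : Fin m → ℝ) : ℝ :=
  ∑ i, y i / ∏ j ∈ univ.erase i, (t i - t j)

theorem dividedDifference_sub {m : ℕ} (t y z : Fin m → ℝ) :
    dividedDifference t (y - z) = dividedDifference t y - dividedDifference t z := by
  simp only [dividedDifference, Pi.sub_apply, sub_div, sum_sub_distrib]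

theorem exists_dividedDifference_eq_iteratedDerivWithin {a b : ℝ} (hab : a < b) {k : ℕ}
    {f : ℝ → ℝ} (hf : ContDiffOn ℝ k f (Set.Icc a b)) {t : Fin (k + 1) → ℝ} (ht : StrictMono t)
    (htI : ∀ i, t i ∈ Set.Icc a b) :
    ∃ ξ ∈ Set.Icc a b,
      dividedDifference t (fun i => f (t i)) =
        iteratedDerivWithin k f (Set.Icc a b) ξ / k.factorial := by
  set P := Lagrange.interpolate univ t (fun i => f (t i))
  have hinj : Set.InjOn t (univ : Finset (Fin (k + 1))) := ht.injective.injOn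
  have hPdeg : P.degree < #(univ : Finset (Fin (k + 1))) := Lagrange.degree_interpolate_lt _ hinj
  have hPk : P.natDegree ≤ k := by
    rw [card_univ, Fintype.card_fin] at hPdeg
    exact natDegree_le_of_degree_le (Order.le_of_lt_succ hPdeg)
  have hPt : ∀ i, P.eval (t i) = f (t i) := fun i =>
    Lagrange.eval_interpolate_at_node _ hinj (mem_univ i)
  have hP : ContDiffOn ℝ k (fun x => P.eval x) (Set.Icc a b) := (P.contDiff_aeval k).contDiffOn
  -- `f - P` vanishes at the nodes, and `(f - P)⁽ᵏ⁾ = f⁽ᵏ⁾ - k! · coeff_k P`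
  obtain ⟨ξ, hξI, hξ⟩ := exists_iteratedDerivWithin_eq_zero (g := f - fun x => P.eval x) hab
    (hf.sub hP) ht htI fun i => by simp [hPt]
  refine ⟨ξ, hξI, ?_⟩
  rw [iteratedDerivWithin_sub hξI (uniqueDiffOn_Icc hab) (hf ξ hξI) (hP ξ hξI),
    P.iteratedDerivWithin_eval_of_natDegree_le (uniqueDiffOn_Icc hab) hPk hξI, sub_eq_zero] at hξ
  have hcoeff := Lagrange.coeff_eq_sum hinj hPdeg
  simp only [card_univ, Fintype.card_fin, add_tsub_cancel_right, hPt] at hcoeff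
  rw [hξ, dividedDifference, ← hcoeff]
  field_simp

theorem one_le_abs_prod_erase_intCast_sub {m : ℕ} {n : Fin m → ℤ} (hn : Function.Injective n)
    (i : Fin m) : 1 ≤ |∏ j ∈ univ.erase i, ((n i : ℝ) - n j)| := by
  have hne : ∏ j ∈ univ.erase i, (n i - n j) ≠ 0 :=
    prod_ne_zero_iff.2 fun j hj => sub_ne_zero.2 fun h => (ne_of_mem_erase hj) (hn h).symm
  exact_mod_cast Int.one_le_abs hne

theorem abs_dividedDifference_intCast_le {m : ℕ} {n : Fin m → ℤ} (hn : Function.Injective n)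
    (y : Fin m → ℝ) : |dividedDifference (fun i => (n i : ℝ)) y| ≤ ∑ i, |y i| :=
  (abs_sum_le_sum_abs _ _).trans <| sum_le_sum fun i _ => by
    rw [abs_div]
    exact div_le_self (abs_nonneg _) (one_le_abs_prod_erase_intCast_sub hn i)

def ascendingPairs (m : ℕ) : Finset (Fin m × Fin m) := {p | p.1 < p.2}

theorem card_ascendingPairs (m : ℕ) : #(ascendingPairs m) = m * (m - 1) / 2 := by
  have hslice : ∀ i : Fin m, #{j | i < j} = m - 1 - i := fun i => by
    rw [filter_lt_eq_Ioi, Fin.card_Ioi]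
  rw [ascendingPairs, card_filter, Fintype.sum_prod_type]
  simp only [← card_filter, hslice]
  rw [Fin.sum_univ_eq_sum_range (fun i => m - 1 - i), sum_range_reflect (fun i => i), sum_range_id]

theorem prod_erase_sub_dvd_prod_ascendingPairs {m : ℕ} {n : Fin m → ℤ} (hn : StrictMono n)
    (i : Fin m) :
    ∏ j ∈ univ.erase i, (n i - n j) ∣ ∏ p ∈ ascendingPairs m, (n p.2 - n p.1) := by
  rw [← abs_dvd, abs_prod]
  have hpair : ∀ j, |n i - n j| = n (max i j) - n (min i j) := fun j => by
    rcases le_total i j with h | h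
    · rw [max_eq_right h, min_eq_left h, abs_sub_comm, abs_of_nonneg (sub_nonneg.2 (hn.monotone h))]
    · rw [max_eq_left h, min_eq_right h, abs_of_nonneg (sub_nonneg.2 (hn.monotone h))]
  have hinj : Set.InjOn (fun j => (min i j, max i j)) (univ.erase i) := fun j hj j' hj' h => by
    have hji := Fin.val_ne_of_ne (ne_of_mem_erase hj)
    have hj'i := Fin.val_ne_of_ne (ne_of_mem_erase hj')
    simp only [Prod.mk.injEq, Fin.ext_iff, Fin.coe_min, Fin.coe_max] at h ⊢
    omega
  calc ∏ j ∈ univ.erase i, |n i - n j|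
      = ∏ p ∈ (univ.erase i).image fun j => (min i j, max i j), (n p.2 - n p.1) := by
        rw [prod_image hinj]; exact prod_congr rfl fun j _ => hpair j
    _ ∣ ∏ p ∈ ascendingPairs m, (n p.2 - n p.1) := by
        refine prod_dvd_prod_of_subset _ _ _ fun p hp => ?_
        obtain ⟨j, hj, rfl⟩ := mem_image.1 hp
        simpa [ascendingPairs] using ne_of_mem_erase hj

theorem prod_ascendingPairs_le_pow {k : ℕ} {n : Fin (k + 1) → ℤ} (hn : StrictMono n) :
    ∏ p ∈ ascendingPairs (k + 1), (n p.2 - n p.1) ≤ (n (Fin.last k) - n 0) ^ (k * (k + 1) / 2) := by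
  have hcard : #(ascendingPairs (k + 1)) = k * (k + 1) / 2 := by
    rw [card_ascendingPairs, add_tsub_cancel_right, mul_comm]
  rw [← hcard, ← prod_const]
  refine prod_le_prod (fun p hp => ?_) fun p _ => ?_
  · exact sub_nonneg.2 (hn.monotone (mem_filter.1 hp).2.le)
  · exact sub_le_sub (hn.monotone (Fin.le_last _)) (hn.monotone (Fin.zero_le _))

theorem one_le_abs_dividedDifference_mul_pow {k : ℕ} {n : Fin (k + 1) → ℤ} (hn : StrictMono n)
    (m : Fin (k + 1) → ℤ) (h0 : dividedDifference (fun i => (n i : ℝ)) (fun i => (m i : ℝ)) ≠ 0) :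
    1 ≤ |dividedDifference (fun i => (n i : ℝ)) (fun i => (m i : ℝ))| *
      ((n (Fin.last k) : ℝ) - n 0) ^ (k * (k + 1) / 2) := by
  set D := dividedDifference (fun i => (n i : ℝ)) (fun i => (m i : ℝ))
  choose u hu using prod_erase_sub_dvd_prod_ascendingPairs hn
  set V := ∏ p ∈ ascendingPairs (k + 1), (n p.2 - n p.1)
  have hq : ∀ i, ∏ j ∈ univ.erase i, ((n i : ℝ) - n j) ≠ 0 := fun i =>
    abs_pos.1 (one_pos.trans_le (one_le_abs_prod_erase_intCast_sub hn.injective i))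
  have hDV : D * V = ((∑ i, m i * u i : ℤ) : ℝ) := by
    simp only [D, dividedDifference]
    rw [sum_mul, Int.cast_sum]
    refine sum_congr rfl fun i _ => ?_
    rw [hu i]
    push_cast
    field_simp [hq i]
  have hV : (0 : ℝ) < V := by
    exact_mod_cast prod_pos fun p hp => sub_pos.2 (hn (mem_filter.1 hp).2)
  have hA : ∑ i, m i * u i ≠ 0 := by
    intro h
    rw [h, Int.cast_zero] at hDV
    exact h0 ((mul_eq_zero.1 hDV).resolve_right hV.ne')
  calc (1 : ℝ) ≤ |((∑ i, m i * u i : ℤ) : ℝ)| := by exact_mod_cast Int.one_le_abs hA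
    _ = |D| * V := by rw [← hDV, abs_mul, abs_of_pos hV]
    _ ≤ |D| * ((n (Fin.last k) : ℝ) - n 0) ^ (k * (k + 1) / 2) := by
        gcongr
        exact_mod_cast prod_ascendingPairs_le_pow hn

theorem one_le_mul_span_pow_of_near_integers {a b δ lam c : ℝ} (hab : a < b) {k : ℕ} {f : ℝ → ℝ}
    (hf : ContDiffOn ℝ k f (Set.Icc a b))
    (hder : ∀ x ∈ Set.Icc a b, lam ≤ |iteratedDerivWithin k f (Set.Icc a b) x| ∧
      |iteratedDerivWithin k f (Set.Icc a b) x| ≤ c * lam)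
    (hsmall : ((k + 1).factorial : ℝ) * δ < lam) {n : Fin (k + 1) → ℤ} (hn : StrictMono n)
    (hnI : ∀ i, (n i : ℝ) ∈ Set.Icc a b) (hnear : ∀ i, |f (n i) - round (f (n i))| < δ) :
    1 ≤ 2 * c * lam * ((n (Fin.last k) : ℝ) - n 0) ^ (k * (k + 1) / 2) := by
  set t : Fin (k + 1) → ℝ := fun i => n i
  set y : Fin (k + 1) → ℝ := fun i => f (t i)
  set m : Fin (k + 1) → ℤ := fun i => round (y i)
  set ym : Fin (k + 1) → ℝ := fun i => m i
  obtain ⟨ξ, hξI, hD⟩ := exists_dividedDifference_eq_iteratedDerivWithin hab hf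
    (fun i j hij => Int.cast_lt.2 (hn hij)) hnI
  have hfac : (0 : ℝ) < k.factorial := mod_cast k.factorial_pos
  have hlow : lam / k.factorial ≤ |dividedDifference t y| := by
    rw [hD, abs_div, abs_of_pos hfac]
    exact div_le_div_of_nonneg_right (hder ξ hξI).1 hfac.le
  have hhigh : |dividedDifference t y| ≤ c * lam := by
    rw [hD, abs_div, abs_of_pos hfac]
    exact (div_le_self (abs_nonneg _) (mod_cast k.factorial_pos)).trans (hder ξ hξI).2
  have herr : |dividedDifference t (y - ym)| < lam / k.factorial := by
    calc |dividedDifference t (y - ym)| ≤ ∑ i, |y i - ym i| :=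
          abs_dividedDifference_intCast_le hn.injective _
      _ < ∑ _i : Fin (k + 1), δ := sum_lt_sum_of_nonempty univ_nonempty fun i _ => hnear i
      _ = (k + 1) * δ := by simp
      _ < lam / k.factorial := by
          rw [lt_div_iff₀ hfac]
          calc (k + 1) * δ * k.factorial = ((k + 1).factorial : ℝ) * δ := by
                push_cast [Nat.factorial_succ]; ring
            _ < lam := hsmall
  have hDm : dividedDifference t ym = dividedDifference t y - dividedDifference t (y - ym) := by
    rw [dividedDifference_sub, sub_sub_cancel]
  have hm0 : dividedDifference t ym ≠ 0 := by
    rw [hDm, sub_ne_zero]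
    intro h
    rw [← h] at herr
    linarith
  have hm : |dividedDifference t ym| ≤ 2 * (c * lam) := by
    rw [hDm]
    linarith [abs_sub (dividedDifference t y) (dividedDifference t (y - ym))]
  calc (1 : ℝ) ≤ |dividedDifference t ym| * ((n (Fin.last k) : ℝ) - n 0) ^ (k * (k + 1) / 2) :=
        one_le_abs_dividedDifference_mul_pow hn m hm0
    _ ≤ 2 * c * lam * ((n (Fin.last k) : ℝ) - n 0) ^ (k * (k + 1) / 2) := by
        rw [mul_assoc 2]
        gcongr
        exact pow_nonneg (sub_nonneg.2 (Int.cast_le.2 (hn.monotone (Fin.zero_le _)))) _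

theorem card_le_of_forall_sub_lt {T : Finset ℤ} {k : ℕ} {L : ℝ}
    (hspread : ∀ n : Fin (k + 1) → ℤ, StrictMono n → (∀ i, n i ∈ T) →
      L ≤ (n (Fin.last k) : ℝ) - n 0)
    (hT : ∀ z ∈ T, ∀ w ∈ T, (w : ℝ) - z < L) : #T ≤ k := by
  by_contra! hcard
  obtain ⟨F, hFT, hF⟩ := exists_subset_card_eq (s := T) (n := k + 1) hcard
  set n : Fin (k + 1) → ℤ := fun i => F.orderIsoOfFin hF i
  have hnT : ∀ i, n i ∈ T := fun i => hFT (F.orderIsoOfFin hF i).2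
  have hn : StrictMono n := fun i j hij => (F.orderIsoOfFin hF).strictMono hij
  exact (hspread n hn hnT).not_gt (hT _ (hnT 0) _ (hnT (Fin.last k)))

theorem card_le_mul_div_add_one {S : Finset ℤ} {k : ℕ} {a b L : ℝ} (hab : a ≤ b) (hL : 0 < L)
    (hS : ∀ z ∈ S, (z : ℝ) ∈ Set.Icc a b)
    (hspread : ∀ n : Fin (k + 1) → ℤ, StrictMono n → (∀ i, n i ∈ S) →
      L ≤ (n (Fin.last k) : ℝ) - n 0) :
    (#S : ℝ) ≤ k * ((b - a) / L + 1) := by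
  -- sort the points into the blocks `[a + j L, a + (j + 1) L)`, each of which holds at most `k`
  set block : ℤ → ℕ := fun z => ⌊((z : ℝ) - a) / L⌋₊
  have hblock : ∀ z ∈ S, block z ∈ range (⌊(b - a) / L⌋₊ + 1) := fun z hz => by
    rw [mem_range, Nat.lt_succ_iff]
    exact Nat.floor_le_floor (div_le_div_of_nonneg_right (by linarith [(hS z hz).2]) hL.le)
  have hfiber : ∀ j ∈ range (⌊(b - a) / L⌋₊ + 1), #{z ∈ S | block z = j} ≤ k := fun j _ => by
    refine card_le_of_forall_sub_lt (fun n hn hnS => hspread n hn fun i => (mem_filter.1 (hnS i)).1)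
      fun z hz w hw => ?_
    obtain ⟨hzS, rfl⟩ := mem_filter.1 hz
    obtain ⟨hwS, hwz⟩ := mem_filter.1 hw
    have hz₀ : (block z : ℝ) ≤ ((z : ℝ) - a) / L :=
      Nat.floor_le (div_nonneg (by linarith [(hS z hzS).1]) hL.le)
    have hw₀ : ((w : ℝ) - a) / L < block z + 1 := hwz ▸ Nat.lt_floor_add_one _
    rw [le_div_iff₀ hL] at hz₀
    rw [div_lt_iff₀ hL] at hw₀
    linarith
  have hcount := card_le_mul_card_image_of_maps_to hblock k hfiber
  rw [card_range] at hcount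
  calc (#S : ℝ) ≤ k * (⌊(b - a) / L⌋₊ + 1 : ℕ) := mod_cast hcount
    _ ≤ k * ((b - a) / L + 1) := by
        push_cast
        gcongr
        exact Nat.floor_le (div_nonneg (sub_nonneg.2 hab) hL.le)

theorem rpow_neg_le_of_one_le_mul_pow {x y p : ℝ} {K : ℕ} (hx : 0 < x) (hy : 0 ≤ y)
    (hKp : K * p = 1) (h : 1 ≤ x * y ^ K) : x ^ (-p) ≤ y := by
  have hK : (0 : ℝ) < K := Nat.cast_pos.2 (Nat.pos_of_ne_zero fun hK => by simp [hK] at hKp)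
  rw [eq_inv_of_mul_eq_one_right hKp, Real.rpow_neg hx.le, ← Real.inv_rpow hx.le,
    Real.rpow_inv_le_iff_of_pos (inv_nonneg.2 hx.le) hy hK, Real.rpow_natCast,
    inv_le_iff_one_le_mul₀' hx]
  exact h

theorem natCast_mul_add_one_div_two_mul {k : ℕ} (hk : k ≠ 0) :
    ((k * (k + 1) / 2 : ℕ) : ℝ) * (2 / (k * (k + 1))) = 1 := by
  rw [Nat.cast_div (Nat.even_mul_succ_self k).two_dvd two_ne_zero]
  push_cast
  field_simp

theorem stmt_6_general (k N : ℕ) (hk : 1 ≤ k) (hN : 4 ≤ N)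
    (δ : ℝ)
    (f : ℝ → ℝ) (lam c : ℝ) (hlam : 0 < lam) (hc : 1 ≤ c)
    (hf : ContDiffOn ℝ k f (Set.Icc (N:ℝ) (2*N)))
    (hder : ∀ x ∈ Set.Icc (N:ℝ) (2*N),
      lam ≤ |iteratedDerivWithin k f (Set.Icc (N:ℝ) (2*N)) x| ∧
      |iteratedDerivWithin k f (Set.Icc (N:ℝ) (2*N)) x| ≤ c * lam)
    (hsmall : ((k+1).factorial : ℝ) * δ < lam) :
    (({n : ℤ | (N:ℤ) ≤ n ∧ n ≤ 2*N ∧ |f n - round (f n)| < δ}.ncard : ℝ)) ≤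
      (2*(k:ℝ) * (2*c) ^ ((2:ℝ)/((k:ℝ)*((k:ℝ)+1)))) * N * lam ^ ((2:ℝ)/((k:ℝ)*((k:ℝ)+1)))
        + 4*(k:ℝ) := by
  set p : ℝ := 2 / ((k : ℝ) * ((k : ℝ) + 1))
  have hcl : 0 < 2 * c * lam := by positivity
  have hab : (N : ℝ) < 2 * N := by
    have : (4 : ℝ) ≤ N := mod_cast hN
    linarith
  set S : Finset ℤ := {n ∈ Icc (N : ℤ) (2 * N) | |f n - round (f n)| < δ}
  have hS : {n : ℤ | (N:ℤ) ≤ n ∧ n ≤ 2*N ∧ |f n - round (f n)| < δ}.ncard = #S := by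
    rw [← Set.ncard_coe_finset]
    congr 1
    ext n
    simp [S, and_assoc]
  have hSI : ∀ z ∈ S, (z : ℝ) ∈ Set.Icc (N : ℝ) (2 * N) := fun z hz => by
    obtain ⟨h₁, h₂⟩ := mem_Icc.1 (mem_filter.1 hz).1
    exact ⟨mod_cast h₁, mod_cast h₂⟩
  have hspread : ∀ n : Fin (k + 1) → ℤ, StrictMono n → (∀ i, n i ∈ S) →
      (2 * c * lam) ^ (-p) ≤ (n (Fin.last k) : ℝ) - n 0 := fun n hn hnS =>
    rpow_neg_le_of_one_le_mul_pow hcl (sub_nonneg.2 (Int.cast_le.2 (hn.monotone (Fin.zero_le _))))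
      (natCast_mul_add_one_div_two_mul (by omega))
      (one_le_mul_span_pow_of_near_integers hab hf hder hsmall hn (fun i => hSI _ (hnS i))
        fun i => (mem_filter.1 (hnS i)).2)
  rw [hS]
  calc (#S : ℝ) ≤ k * ((2 * N - N) / (2 * c * lam) ^ (-p) + 1) :=
        card_le_mul_div_add_one hab.le (Real.rpow_pos_of_pos hcl _) hSI hspread
    _ = k * (2 * c) ^ p * N * lam ^ p + k := by
        rw [Real.rpow_neg hcl.le, div_inv_eq_mul, Real.mul_rpow (by positivity) hlam.le]
        ring
    _ ≤ 2 * k * (2 * c) ^ p * N * lam ^ p + 4 * k := by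
        have : 0 ≤ k * (2 * c) ^ p * N * lam ^ p := by positivity
        linarith

theorem stmt_6 (k N : ℕ) (hk : 1 ≤ k) (hN : 4 ≤ N)
    (δ : ℝ) (hδ0 : 0 < δ) (hδ1 : δ < 1/4)
    (f : ℝ → ℝ) (lam c : ℝ) (hlam : 0 < lam) (hc : 1 ≤ c)
    (hf : ContDiffOn ℝ k f (Set.Icc (N:ℝ) (2*N)))
    (hder : ∀ x ∈ Set.Icc (N:ℝ) (2*N),
      lam ≤ |iteratedDerivWithin k f (Set.Icc (N:ℝ) (2*N)) x| ∧
      |iteratedDerivWithin k f (Set.Icc (N:ℝ) (2*N)) x| ≤ c * lam)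
    (hsmall : ((k+1).factorial : ℝ) * δ < lam) :
    (({n : ℤ | (N:ℤ) ≤ n ∧ n ≤ 2*N ∧ |f n - round (f n)| < δ}.ncard : ℝ)) ≤
      (2*(k:ℝ) * (2*c) ^ ((2:ℝ)/((k:ℝ)*((k:ℝ)+1)))) * N * lam ^ ((2:ℝ)/((k:ℝ)*((k:ℝ)+1)))
        + 4*(k:ℝ) :=
  stmt_6_general k N hk hN δ f lam c hlam hc hf hder hsmall
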